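/- Let F(x) := (D₁(D₂(3·Q·Y₂²)))(x), where 3·Q·Y₂² is the function x ↦ 3 Q(x) Y₂(x)². Then for every ξ ∈ ℝ, (2π)^{-1/2} ∫_ℝ e^{-ixξ} F(x) dx = −(3√π/64)·(−29 − 23ξ² + 9ξ⁴ + 3ξ⁶)·sech(πξ/2). In particular, at ξ = √3 and ξ = −√3 this Fourier transform equals −3√π·sech(π√3/2), which is nonzero. -/

import Mathlib

/-!
Since `sech' = -sech · tanh` and `tanh' = sech²`, expanding the Darboux operators gives
`F = 3√2 (-5 sech³ + 36 sech⁵ - (135/4) sech⁷)`. Taking Fourier transforms of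
`(sechⁿ)' = -n sechⁿ tanh` and `(sechⁿ tanh)' = (n + 1) sechⁿ⁺² - n sechⁿ` yields the recurrence
`n (n + 1) ℱ[sechⁿ⁺²] = (n² + ξ²) ℱ[sechⁿ]`, which reduces everything to `ℱ[sech]`. The
substitution `v = (1 - tanh x) / 2` turns `ℱ[sech](ξ)` into the Beta integral `B(s, 1 - s)` with
`s = (1 + iξ)/2`, and Euler's reflection formula gives
`B(s, 1 - s) = π / sin (πs) = π / cosh (πξ/2)`.
-/

open MeasureTheory

noncomputable section

/-- `sech x = 1 / cosh x`. -/
def sech (x : ℝ) : ℝ := 1 / Real.cosh x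

/-- The soliton `Q(x) = √2 sech x`. -/
def Qsol (x : ℝ) : ℝ := Real.sqrt 2 * sech x

/-- The threshold resonance `Y₂(x) = 1 - (3/2) sech² x`. -/
def Y2 (x : ℝ) : ℝ := 1 - (3 / 2) * sech x ^ 2

/-- The Darboux operator `D₁ f = f' + tanh · f`. -/
def D1 (f : ℝ → ℝ) (x : ℝ) : ℝ := deriv f x + Real.tanh x * f x

/-- The Darboux operator `D₂ f = f' + 2 tanh · f`. -/
def D2 (f : ℝ → ℝ) (x : ℝ) : ℝ := deriv f x + 2 * Real.tanh x * f x

/-- `F = D₁(D₂(3 Q Y₂²))`. -/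
def Ffun (x : ℝ) : ℝ := D1 (D2 (fun y => 3 * Qsol y * Y2 y ^ 2)) x

open Real

lemma sech_pos (x : ℝ) : 0 < sech x := by
  unfold sech; positivity

lemma sech_neg (x : ℝ) : sech (-x) = sech x := by
  rw [sech, sech, Real.cosh_neg]

lemma sech_le_one (x : ℝ) : sech x ≤ 1 := by
  unfold sech
  rw [div_le_one (Real.cosh_pos x)]
  exact Real.one_le_cosh x

lemma tanh_sq (x : ℝ) : tanh x ^ 2 = 1 - sech x ^ 2 := by
  have hc := (Real.cosh_pos x).ne'
  rw [Real.tanh_eq_sinh_div_cosh, sech]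
  field_simp
  linarith [Real.cosh_sq x]

lemma sech_le_four_mul_inv_one_add_sq (x : ℝ) : sech x ≤ 4 * (1 + x ^ 2)⁻¹ := by
  have hcosh : (1 + x ^ 2) / 4 ≤ cosh x := by
    rw [← Real.cosh_abs, Real.cosh_eq]
    nlinarith [Real.quadratic_le_exp_of_nonneg (abs_nonneg x), Real.exp_pos (-|x|), sq_abs x,
      abs_nonneg x]
  unfold sech
  rw [← div_eq_mul_inv, div_le_div_iff₀ (Real.cosh_pos x) (by positivity)]
  linarith

lemma hasDerivAt_sech (x : ℝ) : HasDerivAt sech (-(sech x * tanh x)) x := by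
  have h := (Real.hasDerivAt_cosh x).inv (Real.cosh_pos x).ne'
  refine (h.congr_of_eventuallyEq (.of_forall fun y => one_div _)).congr_deriv ?_
  simp only [sech, Real.tanh_eq_sinh_div_cosh]
  ring

lemma hasDerivAt_tanh (x : ℝ) : HasDerivAt tanh (sech x ^ 2) x := by
  have h := (Real.hasDerivAt_sinh x).div (Real.hasDerivAt_cosh x) (Real.cosh_pos x).ne'
  refine (h.congr_of_eventuallyEq (.of_forall Real.tanh_eq_sinh_div_cosh)).congr_deriv ?_
  have hc := (Real.cosh_pos x).ne'
  simp only [sech]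
  field_simp
  linarith [Real.cosh_sq x]

lemma continuous_sech : Continuous sech :=
  (hasDerivAt_sech · |>.continuousAt) |> continuous_iff_continuousAt.mpr

lemma continuous_tanh : Continuous tanh :=
  (hasDerivAt_tanh · |>.continuousAt) |> continuous_iff_continuousAt.mpr

lemma hasDerivAt_sech_pow (n : ℕ) (x : ℝ) :
    HasDerivAt (fun y => sech y ^ n) (-n * (sech x ^ n * tanh x)) x := by
  refine ((hasDerivAt_pow n (sech x)).comp x (hasDerivAt_sech x)).congr_deriv ?_
  rcases n with _ | n
  · simp
  · push_cast; ring

lemma hasDerivAt_sech_pow_mul_tanh (n : ℕ) (x : ℝ) :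
    HasDerivAt (fun y => sech y ^ n * tanh y)
      ((n + 1) * sech x ^ (n + 2) - n * sech x ^ n) x := by
  refine ((hasDerivAt_sech_pow n x).mul (hasDerivAt_tanh x)).congr_deriv ?_
  linear_combination (-(n : ℝ) * sech x ^ n) * tanh_sq x

lemma integrable_sech : Integrable sech := by
  refine (integrable_inv_one_add_sq.const_mul 4).mono' continuous_sech.aestronglyMeasurable
    (.of_forall fun x => ?_)
  rw [Real.norm_of_nonneg (sech_pos x).le]
  exact sech_le_four_mul_inv_one_add_sq x

lemma integrable_sech_pow_mul_tanh_pow {n : ℕ} (hn : n ≠ 0) (m : ℕ) :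
    Integrable fun x => sech x ^ n * tanh x ^ m := by
  obtain ⟨n, rfl⟩ := Nat.exists_eq_add_one_of_ne_zero hn
  have hbdd : ∀ x, ‖sech x ^ n * tanh x ^ m‖ ≤ 1 := fun x => by
    rw [norm_mul, norm_pow, norm_pow, Real.norm_of_nonneg (sech_pos x).le]
    exact mul_le_one₀ (pow_le_one₀ (sech_pos x).le (sech_le_one x)) (by positivity)
      (pow_le_one₀ (norm_nonneg _) (Real.abs_tanh_lt_one x).le)
  refine (integrable_sech.mul_bdd ((continuous_sech.pow n).mul
    (continuous_tanh.pow m)).aestronglyMeasurable (.of_forall hbdd)).congr (.of_forall fun x => ?_)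
  simp only [Pi.mul_apply, Pi.pow_apply]
  ring

def fourierIntegralAngular (f : ℝ → ℝ) (ξ : ℝ) : ℂ :=
  ∫ x : ℝ, Complex.exp (-(Complex.I * x * ξ)) * f x

section FourierIntegralAngular

open FourierTransform

variable {f g : ℝ → ℝ}

lemma fourierIntegralAngular_eq_fourier (ξ : ℝ) :
    fourierIntegralAngular f ξ = 𝓕 (fun x => (f x : ℂ)) (ξ / (2 * π)) := by
  rw [Real.fourier_real_eq_integral_exp_smul, fourierIntegralAngular]
  congr 1 with x
  rw [smul_eq_mul]
  congr 2
  push_cast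
  field_simp

lemma integrable_exp_mul_ofReal (hf : Integrable f) (ξ : ℝ) :
    Integrable fun x : ℝ => Complex.exp (-(Complex.I * x * ξ)) * (f x : ℂ) := by
  refine hf.ofReal.bdd_mul (c := 1) (by fun_prop) (.of_forall fun x => ?_)
  rw [show -(Complex.I * x * ξ) = (-(x * ξ) : ℝ) * Complex.I by push_cast; ring,
    Complex.norm_exp_ofReal_mul_I]

lemma fourierIntegralAngular_add (hf : Integrable f) (hg : Integrable g) (ξ : ℝ) :
    fourierIntegralAngular (fun x => f x + g x) ξ =
      fourierIntegralAngular f ξ + fourierIntegralAngular g ξ := by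
  simp only [fourierIntegralAngular, Complex.ofReal_add, mul_add]
  exact integral_add (integrable_exp_mul_ofReal hf ξ) (integrable_exp_mul_ofReal hg ξ)

lemma fourierIntegralAngular_sub (hf : Integrable f) (hg : Integrable g) (ξ : ℝ) :
    fourierIntegralAngular (fun x => f x - g x) ξ =
      fourierIntegralAngular f ξ - fourierIntegralAngular g ξ := by
  simp only [fourierIntegralAngular, Complex.ofReal_sub, mul_sub]
  exact integral_sub (integrable_exp_mul_ofReal hf ξ) (integrable_exp_mul_ofReal hg ξ)

lemma fourierIntegralAngular_const_mul (c : ℝ) (ξ : ℝ) :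
    fourierIntegralAngular (fun x => c * f x) ξ = c * fourierIntegralAngular f ξ := by
  simp only [fourierIntegralAngular, Complex.ofReal_mul, mul_left_comm _ (c : ℂ)]
  exact integral_const_mul _ _

lemma fourierIntegralAngular_of_hasDerivAt {f' : ℝ → ℝ} (hf : ∀ x, HasDerivAt f (f' x) x)
    (hfi : Integrable f) (hf'i : Integrable f') (ξ : ℝ) :
    fourierIntegralAngular f' ξ = Complex.I * ξ * fourierIntegralAngular f ξ := by
  have hderiv : deriv (fun x => (f x : ℂ)) = fun x => (f' x : ℂ) :=
    funext fun x => (hf x).ofReal_comp.deriv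
  have key := Real.fourier_deriv hfi.ofReal (fun x => (hf x).ofReal_comp.differentiableAt)
    (hderiv ▸ hf'i.ofReal)
  rw [hderiv] at key
  rw [fourierIntegralAngular_eq_fourier, fourierIntegralAngular_eq_fourier, key]
  dsimp only
  rw [smul_eq_mul]
  congr 1
  have := Real.pi_ne_zero
  push_cast
  field_simp

end FourierIntegralAngular

lemma ofReal_exp_cpow (r : ℝ) (w : ℂ) : ((exp r : ℝ) : ℂ) ^ w = Complex.exp (r * w) := by
  rw [Complex.cpow_def_of_ne_zero (by exact_mod_cast (Real.exp_pos r).ne'),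
    ← Complex.ofReal_log (Real.exp_pos r).le, Real.log_exp]

lemma image_one_sub_tanh_div_two : (fun x => (1 - tanh x) / 2) '' Set.univ = Set.Ioo 0 1 := by
  ext v
  simp only [Set.image_univ, Set.mem_range, Set.mem_Ioo]
  constructor
  · rintro ⟨x, rfl⟩
    constructor <;> linarith [Real.tanh_lt_one x, Real.neg_one_lt_tanh x]
  · rintro ⟨h0, h1⟩
    refine ⟨Real.artanh (1 - 2 * v), ?_⟩
    rw [Real.tanh_artanh ⟨by linarith, by linarith⟩]
    ring

lemma fourierIntegralAngular_sech_eq_betaIntegral (ξ : ℝ) :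
    fourierIntegralAngular sech ξ =
      Complex.betaIntegral ((1 + Complex.I * ξ) / 2) ((1 - Complex.I * ξ) / 2) := by
  rw [Complex.betaIntegral, intervalIntegral.integral_of_le zero_le_one,
    integral_Ioc_eq_integral_Ioo, ← image_one_sub_tanh_div_two,
    integral_image_eq_integral_abs_deriv_smul MeasurableSet.univ
      (fun x _ => ((hasDerivAt_tanh x).const_sub 1).div_const 2 |>.hasDerivWithinAt)
      (fun x _ y _ hxy => Real.tanh_injective (by linarith [hxy])),
    setIntegral_univ, fourierIntegralAngular]
  congr 1 with x
  set L := log (2 * cosh x)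
  have hL : exp L = 2 * cosh x := Real.exp_log (by positivity [Real.cosh_pos x])
  have hc := (Real.cosh_pos x).ne'
  have hv : (1 - tanh x) / 2 = exp (-x - L) := by
    rw [Real.exp_sub, hL, ← Real.cosh_sub_sinh, Real.tanh_eq_sinh_div_cosh]
    field_simp
  have hw : 1 - (1 - tanh x) / 2 = exp (x - L) := by
    rw [Real.exp_sub, hL, ← Real.cosh_add_sinh, Real.tanh_eq_sinh_div_cosh]
    field_simp
    ring
  rw [show (1 : ℂ) - ((1 - tanh x) / 2 : ℝ) = ((1 - (1 - tanh x) / 2 : ℝ) : ℂ) by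
      push_cast; ring, hw, hv, ofReal_exp_cpow, ofReal_exp_cpow, ← Complex.exp_add,
    show ((-x - L : ℝ) : ℂ) * ((1 + Complex.I * ξ) / 2 - 1) + ((x - L : ℝ) : ℂ) *
      ((1 - Complex.I * ξ) / 2 - 1) = -(Complex.I * x * ξ) + L by push_cast; ring,
    Complex.exp_add, ← Complex.ofReal_exp, hL, neg_div, abs_neg,
    abs_of_nonneg (by positivity), Complex.real_smul]
  simp only [sech]
  push_cast
  field_simp

lemma betaIntegral_half_add_mul_I_half_sub_mul_I (ξ : ℝ) :
    Complex.betaIntegral ((1 + Complex.I * ξ) / 2) ((1 - Complex.I * ξ) / 2) =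
      π / cosh (π * ξ / 2) := by
  set s : ℂ := (1 + Complex.I * ξ) / 2
  have hs : (1 - Complex.I * ξ) / 2 = 1 - s := by ring
  have hre : 0 < s.re := by simp [s]
  have hre' : 0 < (1 - s).re := by simp [s]; norm_num
  have hsin : Complex.sin (π * s) = cosh (π * ξ / 2) := by
    rw [show (π : ℂ) * s = π / 2 + (π * ξ / 2 : ℝ) * Complex.I by
        simp only [s]; push_cast; ring,
      Complex.sin_add, Complex.sin_pi_div_two, Complex.cos_pi_div_two, Complex.cos_mul_I,
      ← Complex.ofReal_cosh]
    ring
  have hbeta := Complex.Gamma_mul_Gamma_eq_betaIntegral hre hre'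
  rw [add_sub_cancel, Complex.Gamma_one, one_mul, Complex.Gamma_mul_Gamma_one_sub, hsin] at hbeta
  rw [hs, ← hbeta]

lemma fourierIntegralAngular_sech (ξ : ℝ) :
    fourierIntegralAngular sech ξ = π * sech (π * ξ / 2) := by
  rw [fourierIntegralAngular_sech_eq_betaIntegral, betaIntegral_half_add_mul_I_half_sub_mul_I, sech]
  push_cast
  ring

lemma integrable_sech_pow {n : ℕ} (hn : n ≠ 0) : Integrable fun x => sech x ^ n := by
  simpa using integrable_sech_pow_mul_tanh_pow hn 0

lemma integrable_sech_pow_mul_tanh {n : ℕ} (hn : n ≠ 0) :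
    Integrable fun x => sech x ^ n * tanh x := by
  simpa using integrable_sech_pow_mul_tanh_pow hn 1

lemma fourierIntegralAngular_sech_pow_mul_tanh {n : ℕ} (hn : n ≠ 0) (ξ : ℝ) :
    n * fourierIntegralAngular (fun x => sech x ^ n * tanh x) ξ =
      -(Complex.I * ξ * fourierIntegralAngular (fun x => sech x ^ n) ξ) := by
  have h := fourierIntegralAngular_of_hasDerivAt (hasDerivAt_sech_pow n) (integrable_sech_pow hn)
    ((integrable_sech_pow_mul_tanh hn).const_mul _) ξ
  rw [fourierIntegralAngular_const_mul] at h
  push_cast at h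
  linear_combination -h

lemma fourierIntegralAngular_sech_pow_add_two {n : ℕ} (hn : n ≠ 0) (ξ : ℝ) :
    n * (n + 1) * fourierIntegralAngular (fun x => sech x ^ (n + 2)) ξ =
      (n ^ 2 + ξ ^ 2) * fourierIntegralAngular (fun x => sech x ^ n) ξ := by
  have h := fourierIntegralAngular_of_hasDerivAt (hasDerivAt_sech_pow_mul_tanh n)
    (integrable_sech_pow_mul_tanh hn)
    (((integrable_sech_pow (by simp)).const_mul _).sub ((integrable_sech_pow hn).const_mul _)) ξ
  rw [fourierIntegralAngular_sub ((integrable_sech_pow (by simp)).const_mul _)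
    ((integrable_sech_pow hn).const_mul _), fourierIntegralAngular_const_mul,
    fourierIntegralAngular_const_mul] at h
  push_cast at h
  linear_combination (n : ℂ) * h + Complex.I * ξ * fourierIntegralAngular_sech_pow_mul_tanh hn ξ
    - ξ ^ 2 * fourierIntegralAngular (fun x => sech x ^ n) ξ * Complex.I_sq

lemma fourierIntegralAngular_sech_pow_two_mul_add_one (k : ℕ) (ξ : ℝ) :
    fourierIntegralAngular (fun x => sech x ^ (2 * k + 1)) ξ =
      (∏ j ∈ Finset.range k, ((2 * (j : ℂ) + 1) ^ 2 + ξ ^ 2)) / (2 * k).factorial *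
        (π * sech (π * ξ / 2)) := by
  induction k with
  | zero => simp [fourierIntegralAngular_sech]
  | succ k ih =>
    have hrec := fourierIntegralAngular_sech_pow_add_two (n := 2 * k + 1) (by omega) ξ
    rw [show 2 * k + 1 + 2 = 2 * (k + 1) + 1 by omega, ih] at hrec
    push_cast at hrec
    have hfact : ((2 * (k + 1)).factorial : ℂ) =
        (2 * k + 1) * (2 * k + 1 + 1) * (2 * k).factorial := by
      rw [show 2 * (k + 1) = 2 * k + 1 + 1 by omega, Nat.factorial_succ, Nat.factorial_succ]
      push_cast
      ring
    have h1 : (2 * k + 1 : ℂ) ≠ 0 := by norm_cast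
    have h2 : (2 * k + 1 + 1 : ℂ) ≠ 0 := by norm_cast
    have hf : ((2 * k).factorial : ℂ) ≠ 0 := Nat.cast_ne_zero.mpr (Nat.factorial_ne_zero _)
    rw [Finset.prod_range_succ, hfact]
    apply mul_left_cancel₀ (mul_ne_zero h1 h2)
    rw [hrec]
    field_simp

lemma three_mul_Qsol_mul_Y2_sq_eq (x : ℝ) :
    3 * Qsol x * Y2 x ^ 2 = 3 * √2 * (sech x ^ 1 - 3 * sech x ^ 3 + 9 / 4 * sech x ^ 5) := by
  simp only [Qsol, Y2]
  ring

lemma D2_three_mul_Qsol_mul_Y2_sq :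
    D2 (fun y => 3 * Qsol y * Y2 y ^ 2) = fun x => 3 * √2 *
      (sech x ^ 1 * tanh x + 3 * (sech x ^ 3 * tanh x) -
        27 / 4 * (sech x ^ 5 * tanh x)) := by
  funext x
  have hderiv := (((hasDerivAt_sech_pow 1 x).fun_sub
    ((hasDerivAt_sech_pow 3 x).const_mul 3)).fun_add
    ((hasDerivAt_sech_pow 5 x).const_mul (9 / 4))).const_mul (3 * √2)
  rw [D2, (funext three_mul_Qsol_mul_Y2_sq_eq : (fun y => 3 * Qsol y * Y2 y ^ 2) = _),
    hderiv.deriv, three_mul_Qsol_mul_Y2_sq_eq]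
  push_cast
  ring

lemma Ffun_eq :
    Ffun = fun x => 3 * √2 * (-5 * sech x ^ 3 + 36 * sech x ^ 5 - 135 / 4 * sech x ^ 7) := by
  funext x
  have hderiv := (((hasDerivAt_sech_pow_mul_tanh 1 x).fun_add
    ((hasDerivAt_sech_pow_mul_tanh 3 x).const_mul 3)).fun_sub
    ((hasDerivAt_sech_pow_mul_tanh 5 x).const_mul (27 / 4))).const_mul (3 * √2)
  rw [Ffun, D1, D2_three_mul_Qsol_mul_Y2_sq, hderiv.deriv]
  push_cast
  linear_combination 3 * √2 * (sech x + 3 * sech x ^ 3 - 27 / 4 * sech x ^ 5) * tanh_sq x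

lemma fourierIntegralAngular_Ffun (ξ : ℝ) :
    fourierIntegralAngular Ffun ξ =
      3 * √2 / 64 * (29 + 23 * ξ ^ 2 - 9 * ξ ^ 4 - 3 * ξ ^ 6) * (π * sech (π * ξ / 2)) := by
  have hint (n : ℕ) (hn : n ≠ 0) (c : ℝ) : Integrable fun x => c * sech x ^ n :=
    (integrable_sech_pow hn).const_mul c
  have h3 := fourierIntegralAngular_sech_pow_two_mul_add_one 1 ξ
  have h5 := fourierIntegralAngular_sech_pow_two_mul_add_one 2 ξ
  have h7 := fourierIntegralAngular_sech_pow_two_mul_add_one 3 ξ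
  norm_num [Finset.prod_range_succ, Nat.factorial] at h3 h5 h7
  rw [Ffun_eq, fourierIntegralAngular_const_mul,
    fourierIntegralAngular_sub ((hint 3 three_ne_zero _).fun_add (hint 5 (by norm_num) _))
      (hint 7 (by norm_num) _),
    fourierIntegralAngular_add (hint 3 three_ne_zero _) (hint 5 (by norm_num) _),
    fourierIntegralAngular_const_mul, fourierIntegralAngular_const_mul,
    fourierIntegralAngular_const_mul, h3, h5, h7]
  push_cast
  ring

lemma inv_sqrt_two_pi_mul_fourierIntegralAngular_Ffun (ξ : ℝ) :
    (√(2 * π) : ℂ)⁻¹ * fourierIntegralAngular Ffun ξ =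
      ((-(3 * √π / 64) * (-29 - 23 * ξ ^ 2 + 9 * ξ ^ 4 + 3 * ξ ^ 6) * sech (π * ξ / 2) : ℝ) : ℂ) := by
  have h2 : (√2 : ℂ) ≠ 0 := by norm_num
  have hπ : (√π : ℂ) ≠ 0 := by exact_mod_cast (Real.sqrt_pos.mpr Real.pi_pos).ne'
  have hπ_sq : (π : ℂ) = (√π : ℂ) ^ 2 := by exact_mod_cast (Real.sq_sqrt Real.pi_pos.le).symm
  rw [fourierIntegralAngular_Ffun, Real.sqrt_mul zero_le_two]
  push_cast
  rw [hπ_sq]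
  field_simp
  ring

/-- The Fourier transform of `D₁ D₂ (3 Q Y₂²)` and the resonance condition at `±√3`. -/
theorem fourier_transform_of_source_term :
    (∀ ξ : ℝ,
        (Real.sqrt (2 * Real.pi) : ℂ)⁻¹ *
            (∫ x : ℝ, Complex.exp (-(Complex.I * (x : ℂ) * (ξ : ℂ))) * (Ffun x : ℂ)) =
          ((-(3 * Real.sqrt Real.pi / 64) *
              (-29 - 23 * ξ ^ 2 + 9 * ξ ^ 4 + 3 * ξ ^ 6) * sech (Real.pi * ξ / 2) : ℝ) : ℂ)) ∧
      (∀ ξ : ℝ, ξ = Real.sqrt 3 ∨ ξ = -Real.sqrt 3 →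
        (Real.sqrt (2 * Real.pi) : ℂ)⁻¹ *
            (∫ x : ℝ, Complex.exp (-(Complex.I * (x : ℂ) * (ξ : ℂ))) * (Ffun x : ℂ)) =
          ((-3 * Real.sqrt Real.pi * sech (Real.pi * Real.sqrt 3 / 2) : ℝ) : ℂ)) ∧
      (-3 * Real.sqrt Real.pi * sech (Real.pi * Real.sqrt 3 / 2) : ℝ) ≠ 0 := by
  refine ⟨inv_sqrt_two_pi_mul_fourierIntegralAngular_Ffun, fun ξ hξ => ?_,
    by positivity [sech_pos (π * √3 / 2)]⟩
  have hsq : ξ ^ 2 = 3 := by rcases hξ with rfl | rfl <;> simp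
  have hsech : sech (π * ξ / 2) = sech (π * √3 / 2) := by
    rcases hξ with rfl | rfl
    · rfl
    · rw [mul_neg, neg_div, sech_neg]
  change (√(2 * π) : ℂ)⁻¹ * fourierIntegralAngular Ffun ξ = _
  rw [inv_sqrt_two_pi_mul_fourierIntegralAngular_Ffun, hsech,
    show ξ ^ 4 = (ξ ^ 2) ^ 2 by ring, show ξ ^ 6 = (ξ ^ 2) ^ 3 by ring, hsq]
  norm_num
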